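/- arXiv:2005.13581 — 4 statements merged into one kernel-verified Lean document; each statement's English description precedes it below -/
import Mathlib

section
/- Let α be a finite type, let f₀, f₁, …, f_{k−1} : α → α, and let f = f_{k−1} ∘ f_{k−2} ∘ ⋯ ∘ f₀. If r(f) = 1, then for every i, r(f_i) = 0 or r(f_i) = 1; that is, each f_i is either a bijection or a quasi-bijection. -/
/-- The ramification degree of `f : α → α`:
`r(f) = ∑_{y} max(0, |f⁻¹({y})| − 1)` (natural subtraction truncates at 0). -/
def ramDeg {α : Type*} [Fintype α] [DecidableEq α] (f : α → α) : ℕ :=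
  ∑ y : α, ((Finset.univ.filter (fun x => f x = y)).card - 1)

/-- The composition `f_{k-1} ∘ f_{k-2} ∘ ⋯ ∘ f₀` of a finite family of self-maps
(`f 0` is applied first). -/
def compFamily {α : Type*} {k : ℕ} (f : Fin k → α → α) : α → α :=
  (List.ofFn f).foldl (fun acc g => g ∘ acc) id

/-!
Each fibre of `f` contributes `|f⁻¹{y}| - 1` to `r(f)` when it is nonempty and nothing when it
is empty, so `r(f) = |α| - |f(α)|`. Composing on either side can only shrink the image, so
`r(f_i) ≤ r(g ∘ f_i ∘ h) = r(f) = 1` for every factor `f_i` of `f`.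
-/

open Finset

section Ramification

variable {α : Type*} [Fintype α] [DecidableEq α]

theorem ramDeg_add_card_image (f : α → α) :
    ramDeg f + (univ.image f).card = Fintype.card α := by
  have himage : univ.image f = univ.filter fun y => 0 < (univ.filter fun x => f x = y).card := by
    ext y
    simp [card_pos, Finset.Nonempty]
  rw [ramDeg, himage, card_filter, ← sum_add_distrib, ← card_univ,
    card_eq_sum_card_fiberwise (t := univ) fun x _ => mem_univ (f x)]
  refine sum_congr rfl fun y _ => ?_
  split_ifs <;> omega

theorem ramDeg_le_ramDeg_comp_left (h g : α → α) : ramDeg g ≤ ramDeg (h ∘ g) := by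
  have hcard : (univ.image (h ∘ g)).card ≤ (univ.image g).card := by
    rw [← image_image]
    exact card_image_le
  have := ramDeg_add_card_image g
  have := ramDeg_add_card_image (h ∘ g)
  omega

theorem ramDeg_le_ramDeg_comp_right (g h : α → α) : ramDeg g ≤ ramDeg (g ∘ h) := by
  have hcard : (univ.image (g ∘ h)).card ≤ (univ.image g).card := by
    rw [← image_image]
    exact card_le_card (image_subset_image (subset_univ _))
  have := ramDeg_add_card_image g
  have := ramDeg_add_card_image (g ∘ h)
  omega

theorem ramDeg_le_ramDeg_comp (g f h : α → α) : ramDeg f ≤ ramDeg (g ∘ f ∘ h) :=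
  (ramDeg_le_ramDeg_comp_right f h).trans (ramDeg_le_ramDeg_comp_left g (f ∘ h))

end Ramification

section Composition

variable {α : Type*}

theorem foldl_comp_eq_foldl_id_comp (L : List (α → α)) (h : α → α) :
    L.foldl (fun acc g => g ∘ acc) h = L.foldl (fun acc g => g ∘ acc) id ∘ h := by
  induction L generalizing h with
  | nil => rfl
  | cons a L ih => rw [List.foldl_cons, List.foldl_cons, ih, ih (a ∘ id)]; rfl

theorem exists_compFamily_eq_comp {k : ℕ} (f : Fin k → α → α) (i : Fin k) :
    ∃ g h : α → α, compFamily f = g ∘ f i ∘ h := by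
  obtain ⟨s, t, hst⟩ := List.append_of_mem (List.mem_ofFn.mpr ⟨i, rfl⟩ : f i ∈ List.ofFn f)
  refine ⟨t.foldl (fun acc g => g ∘ acc) id, s.foldl (fun acc g => g ∘ acc) id, ?_⟩
  rw [compFamily, hst, List.foldl_append, List.foldl_cons, foldl_comp_eq_foldl_id_comp]

end Composition

theorem ramDeg_components_of_comp_eq_one {α : Type*} [Fintype α] [DecidableEq α]
    {k : ℕ} (f : Fin k → α → α) (hf : ramDeg (compFamily f) = 1) :
    ∀ i : Fin k, ramDeg (f i) = 0 ∨ ramDeg (f i) = 1 := by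
  intro i
  obtain ⟨g, h, hgh⟩ := exists_compFamily_eq_comp f i
  have hle := ramDeg_le_ramDeg_comp g (f i) h
  rw [← hgh, hf] at hle
  omega
end

section
/- Let n ≥ 1 and let f : (Fin n → Bool) → (Fin n → Bool) be a bijection that has a pass-through coordinate. Then the permutation of Fin n → Bool determined by f is even; that is, its sign equals +1. -/
/-- `j` is a pass-through coordinate of `f`: `f` copies coordinate `j` through,
and no other output coordinate depends on input coordinate `j`. -/
def PassThrough {n : ℕ} (f : (Fin n → Bool) → (Fin n → Bool)) (j : Fin n) : Prop :=
  (∀ x, f x j = x j) ∧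
  ∀ l : Fin n, l ≠ j → ∀ x x' : Fin n → Bool,
    (∀ i : Fin n, i ≠ j → x i = x' i) → f x l = f x' l

theorem sign_eq_one_of_passThrough {n : ℕ} (hn : 1 ≤ n)
    (f : (Fin n → Bool) → (Fin n → Bool)) (hf : Function.Bijective f)
    (hpass : ∃ j : Fin n, PassThrough f j) :
    Equiv.Perm.sign (Equiv.ofBijective f hf) = 1 := by
  obtain ⟨j, hj1, hj2⟩ := hpass
  set π : Equiv.Perm (Fin n → Bool) := Equiv.ofBijective f hf with hπ
  set e := Equiv.funSplitAt j Bool with he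
  set σ : Equiv.Perm (Bool × ({ k : Fin n // k ≠ j } → Bool)) := e.permCongr π with hσ
  have hπf : ∀ x, π x = f x := fun x => rfl
  have hfst : ∀ b y, (σ (b, y)).1 = b := by
    intro b y
    simp only [hσ, Equiv.permCongr_apply, he, Equiv.funSplitAt_apply, hπf]
    rw [hj1]
    simp [Equiv.funSplitAt_symm_apply]
  have hsnd : ∀ b y, (σ (b, y)).2 = (σ (false, y)).2 := by
    intro b y
    simp only [hσ, Equiv.permCongr_apply, he, Equiv.funSplitAt_apply, hπf]
    funext l
    exact hj2 l.1 l.2 _ _ (by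
      intro i hi
      simp [Equiv.funSplitAt_symm_apply, hi])
  have hfst' : ∀ b y, (σ.symm (b, y)).1 = b := by
    intro b y
    have h := hfst (σ.symm (b, y)).1 (σ.symm (b, y)).2
    rw [Prod.mk.eta, Equiv.apply_symm_apply] at h
    exact h.symm
  have key : ∀ (b : Bool) y, σ (b, (σ.symm (b, y)).2) = (b, y) := by
    intro b y
    calc σ (b, (σ.symm (b, y)).2)
        = σ ((σ.symm (b, y)).1, (σ.symm (b, y)).2) := by rw [hfst']
      _ = σ (σ.symm (b, y)) := by rw [Prod.mk.eta]
      _ = (b, y) := Equiv.apply_symm_apply σ _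
  have hsnd' : ∀ b y, (σ.symm (b, y)).2 = (σ.symm (false, y)).2 := by
    intro b y
    have h2 : σ (b, (σ.symm (false, y)).2) = (b, y) := by
      refine Prod.ext (hfst _ _) ?_
      rw [hsnd b, key]
    have := congrArg (fun p => (σ.symm p).2) h2
    simp only [Equiv.symm_apply_apply] at this
    exact this.symm
  set g : Equiv.Perm ({ k : Fin n // k ≠ j } → Bool) :=
    { toFun := fun y => (σ (false, y)).2
      invFun := fun y => (σ.symm (false, y)).2
      left_inv := by
        intro y
        show (σ.symm (false, (σ (false, y)).2)).2 = y
        have h1 : (false, (σ (false, y)).2) = σ (false, y) :=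
          Prod.ext (hfst false y).symm rfl
        rw [h1, Equiv.symm_apply_apply]
      right_inv := by
        intro y
        show (σ (false, (σ.symm (false, y)).2)).2 = y
        rw [key] } with hg
  have hσeq : σ = Equiv.prodCongrRight (fun _ : Bool => g) := by
    apply Equiv.ext
    intro p
    have : p = (p.1, p.2) := rfl
    rw [this]
    refine Prod.ext ?_ ?_
    · exact hfst p.1 p.2
    · exact hsnd p.1 p.2
  have hs : Equiv.Perm.sign σ = Equiv.Perm.sign π := Equiv.Perm.sign_permCongr e π
  rw [← hs, hσeq, Equiv.Perm.sign_prodCongrRight]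
  simp [Int.units_mul_self]
end

section
/- Let n ≥ 1 and let f : (Fin n → Bool) → (Fin n → Bool) be a function that has a pass-through coordinate. Then f is not a quasi-bijection; equivalently, r(f) ≠ 1. -/
/-- `f` is a quasi-bijection if exactly one element has no preimage under `f`. -/
def QuasiBijective {α : Type*} (f : α → α) : Prop :=
  ∃! y : α, ∀ x : α, f x ≠ y

/-- Flip coordinate `j`. -/
def Flip {n : ℕ} (j : Fin n) (x : Fin n → Bool) : Fin n → Bool :=
  Function.update x j (!x j)

lemma Flip_self {n : ℕ} (j : Fin n) (x : Fin n → Bool) : Flip j x j = !x j := by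
  simp [Flip]

lemma Flip_other {n : ℕ} (j l : Fin n) (hl : l ≠ j) (x : Fin n → Bool) :
    Flip j x l = x l := by
  simp [Flip, Function.update_of_ne hl]

lemma Flip_involutive {n : ℕ} (j : Fin n) : Function.Involutive (Flip j) := by
  intro x
  funext l
  by_cases h : l = j
  · subst h; simp [Flip_self, Flip]
  · rw [Flip_other j l h, Flip_other j l h]

lemma Flip_ne {n : ℕ} (j : Fin n) (x : Fin n → Bool) : Flip j x ≠ x := by
  intro h
  have := congrFun h j
  rw [Flip_self] at this
  simp at this

lemma f_flip {n : ℕ} {f : (Fin n → Bool) → (Fin n → Bool)} {j : Fin n}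
    (hp : PassThrough f j) (x : Fin n → Bool) : f (Flip j x) = Flip j (f x) := by
  funext l
  by_cases h : l = j
  · subst h
    rw [hp.1, Flip_self, Flip_self, hp.1]
  · rw [Flip_other j l h]
    exact hp.2 l h _ _ (fun i hi => Flip_other j i hi x)

lemma fiber_card_flip {n : ℕ} {f : (Fin n → Bool) → (Fin n → Bool)} {j : Fin n}
    (hp : PassThrough f j) (y : Fin n → Bool) :
    (Finset.univ.filter (fun x => f x = Flip j y)).card
      = (Finset.univ.filter (fun x => f x = y)).card := by
  apply Finset.card_bij' (fun x _ => Flip j x) (fun x _ => Flip j x)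
  · intro x hx
    simp only [Finset.mem_filter, Finset.mem_univ, true_and] at hx ⊢
    rw [f_flip hp, hx, Flip_involutive]
  · intro x hx
    simp only [Finset.mem_filter, Finset.mem_univ, true_and] at hx ⊢
    rw [f_flip hp, hx]
  · intro x _; exact Flip_involutive j x
  · intro x _; exact Flip_involutive j x

theorem not_quasiBijective_of_passThrough {n : ℕ} (hn : 1 ≤ n)
    (f : (Fin n → Bool) → (Fin n → Bool))
    (hpass : ∃ j : Fin n, PassThrough f j) :
    ¬ QuasiBijective f ∧ ramDeg f ≠ 1 := by
  obtain ⟨j, hp⟩ := hpass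
  constructor
  · rintro ⟨y, hy, huniq⟩
    have h2 : ∀ x, f x ≠ Flip j y := by
      intro x hx
      apply hy (Flip j x)
      rw [f_flip hp, hx, Flip_involutive]
    exact Flip_ne j y (huniq _ h2)
  · have key : ramDeg f = 2 * ∑ y ∈ Finset.univ.filter (fun y : Fin n → Bool => y j = true),
        ((Finset.univ.filter (fun x => f x = y)).card - 1) := by
      rw [ramDeg, ← Finset.sum_filter_add_sum_filter_not Finset.univ
        (fun y : Fin n → Bool => y j = true), two_mul]
      congr 1
      apply Finset.sum_bij' (fun y _ => Flip j y) (fun y _ => Flip j y)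
      · intro y hy
        simp only [Finset.mem_filter, Finset.mem_univ, true_and] at hy ⊢
        rw [Flip_self]
        simp at hy ⊢
        exact hy
      · intro y hy
        simp only [Finset.mem_filter, Finset.mem_univ, true_and] at hy ⊢
        rw [Flip_self, hy]
        simp
      · intro y _; exact Flip_involutive j y
      · intro y _; exact Flip_involutive j y
      · intro y _
        rw [fiber_card_flip hp y]
    rw [key]
    intro h
    have h2 : (2:ℕ) ∣ 1 := ⟨_, h.symm⟩
    norm_num at h2
end

section
/- Let n ≥ 1 and let f₀, f₁, …, f_{k−1} : (Fin n → Bool) → (Fin n → Bool) be functions each of which has a pass-through coordinate, and let f = f_{k−1} ∘ f_{k−2} ∘ ⋯ ∘ f₀. If f is a bijection, then the permutation of Fin n → Bool determined by f is even; that is, the composition is never an odd bijection. -/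
lemma foldl_comp {α : Type*} (l : List (α → α)) (c : α → α) :
    l.foldl (fun acc g => g ∘ acc) c = l.foldl (fun acc g => g ∘ acc) id ∘ c := by
  induction l generalizing c with
  | nil => rfl
  | cons a l ih =>
    simp only [List.foldl_cons]
    rw [ih (a ∘ c), ih (a ∘ id)]
    rfl

lemma compFamily_succ {α : Type*} {k : ℕ} (f : Fin (k+1) → α → α) :
    compFamily f = compFamily (fun i => f i.succ) ∘ f 0 := by
  unfold compFamily
  rw [List.ofFn_succ, List.foldl_cons, foldl_comp]
  rfl

lemma sign_passThrough {n : ℕ} {f : (Fin n → Bool) → (Fin n → Bool)} {j : Fin n}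
    (h : PassThrough f j) (hf : Function.Bijective f) :
    Equiv.Perm.sign (Equiv.ofBijective f hf) = 1 := by
  classical
  set e := Equiv.funSplitAt j Bool with he
  set g : ({ l // l ≠ j } → Bool) → ({ l // l ≠ j } → Bool) :=
    fun y => (e (f (e.symm (false, y)))).2 with hg
  have hsymmj : ∀ b y, e.symm (b, y) j = b := by
    intro b y; simp [he, Equiv.funSplitAt, Equiv.piSplitAt]
  have hsymmne : ∀ b y (i : Fin n), ∀ hi : i ≠ j, e.symm (b, y) i = y ⟨i, hi⟩ := by
    intro b y i hi; simp [he, Equiv.funSplitAt, Equiv.piSplitAt, hi]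
  have key : ∀ b y, e (f (e.symm (b, y))) = (b, g y) := by
    intro b y
    have h1 : (e (f (e.symm (b, y)))).1 = b := by
      show f (e.symm (b, y)) j = b
      rw [h.1, hsymmj]
    have h2 : (e (f (e.symm (b, y)))).2 = g y := by
      funext l
      show f (e.symm (b, y)) l.1 = f (e.symm (false, y)) l.1
      exact h.2 l.1 l.2 _ _ (fun i hi => by rw [hsymmne _ _ _ hi, hsymmne _ _ _ hi])
    exact Prod.ext h1 h2
  have hgbij : Function.Bijective g := by
    constructor
    · intro y y' hyy
      have h1 : f (e.symm (false, y)) = f (e.symm (false, y')) :=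
        e.injective (by rw [key, key, hyy])
      have h2 : ((false : Bool), y) = ((false : Bool), y') :=
        e.symm.injective (hf.1 h1)
      exact ((Prod.mk.injEq _ _ _ _).mp h2).2
    · intro z
      obtain ⟨x, hx⟩ := hf.2 (e.symm (false, z))
      refine ⟨(e x).2, ?_⟩
      have hxj : (e x).1 = false := by
        show x j = false
        have : f x j = e.symm (false, z) j := by rw [hx]
        rwa [h.1, hsymmj] at this
      have hkey := key (e x).1 (e x).2
      rw [Prod.mk.eta, Equiv.symm_apply_apply, hx, Equiv.apply_symm_apply, hxj] at hkey
      exact (((Prod.mk.injEq _ _ _ _).mp hkey).2).symm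
  -- express f as conjugate of prodCongrRight
  have hEq : Equiv.ofBijective f hf =
      (e.trans (Equiv.prodCongrRight (fun _ : Bool => Equiv.ofBijective g hgbij))).trans e.symm := by
    refine Equiv.ext fun x => ?_
    show f x = e.symm ((e x).1, g (e x).2)
    have := key (e x).1 (e x).2
    rw [Prod.mk.eta, Equiv.symm_apply_apply] at this
    rw [← this, Equiv.symm_apply_apply]
  rw [hEq, Equiv.Perm.sign_trans_trans_symm, Equiv.Perm.sign_prodCongrRight]
  simp [Int.units_sq]

theorem sign_comp_passThrough_eq_one {n : ℕ} (hn : 1 ≤ n) {k : ℕ}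
    (f : Fin k → (Fin n → Bool) → (Fin n → Bool))
    (hpass : ∀ i : Fin k, ∃ j : Fin n, PassThrough (f i) j)
    (hf : Function.Bijective (compFamily f)) :
    Equiv.Perm.sign (Equiv.ofBijective (compFamily f) hf) = 1 := by
  classical
  induction k with
  | zero =>
    have : Equiv.ofBijective (compFamily f) hf = Equiv.refl _ :=
      Equiv.ext fun x => rfl
    rw [this, Equiv.Perm.sign_refl]
  | succ k ih =>
    have hdecomp := compFamily_succ f
    have hf0 : Function.Bijective (f 0) := by
      rw [Finite.injective_iff_bijective.symm]
      have : Function.Injective (compFamily (fun i => f i.succ) ∘ f 0) := by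
        rw [← hdecomp]; exact hf.1
      exact Function.Injective.of_comp this
    have hrest : Function.Bijective (compFamily (fun i => f i.succ)) := by
      constructor
      · intro a b hab
        obtain ⟨x, rfl⟩ := hf0.2 a
        obtain ⟨y, rfl⟩ := hf0.2 b
        have : compFamily f x = compFamily f y := by
          rw [hdecomp]; exact hab
        rw [hf.1 this]
      · intro z
        obtain ⟨x, hx⟩ := hf.2 z
        exact ⟨f 0 x, by rw [← Function.comp_apply (f := compFamily fun i => f i.succ), ← hdecomp, hx]⟩
    have hmul : Equiv.ofBijective (compFamily f) hf =
        (Equiv.ofBijective (compFamily (fun i => f i.succ)) hrest) *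
          (Equiv.ofBijective (f 0) hf0) := by
      refine Equiv.ext fun x => ?_
      show compFamily f x = compFamily (fun i => f i.succ) (f 0 x)
      rw [hdecomp]; rfl
    rw [hmul, map_mul]
    obtain ⟨j, hj⟩ := hpass 0
    rw [ih (fun i => f i.succ) (fun i => hpass i.succ) hrest, sign_passThrough hj hf0, mul_one]
end
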